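/- Let G be an inverse semigroup, H ⊆ G a finite subsemigroup closed under the involution with idempotent set E_H, and A the unitization over ℂ of the semigroup algebra MonoidAlgebra ℂ G. For e ∈ E_H set p_e := e · ∏_{f ∈ E_H, e f ≠ e} (1 − f) ∈ A. If g ∈ G and e ∈ E_H satisfy p_e · (g* g) · p_e = p_e in A, then e · (g* g) = e in G. -/

import Mathlib

/-! The idempotents of an inverse semigroup form a commutative subsemigroup `E`, on which
`x ↦ [e x = e]` is multiplicative. It therefore extends to a character `χ_e` of the unitized
algebra of `E`, which embeds into the unitized algebra of `G`. Both `p_e` and `g* g` come from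
this subalgebra and `χ_e (p_e) = 1`, so applying `χ_e` to `p_e (g* g) p_e = p_e` gives
`χ_e (g* g) = 1`, that is `e (g* g) = e`. -/

/-- An inverse semigroup: a semigroup with an involution `g ↦ g*` such that
`g** = g`, `(gh)* = h* g*`, `g g* g = g`, and any two idempotents commute. -/
class InverseSemigroup (G : Type*) extends Semigroup G, Star G where
  star_star : ∀ g : G, star (star g) = g
  star_mul : ∀ g h : G, star (g * h) = star h * star g
  mul_star_mul_self : ∀ g : G, g * star g * g = g
  idem_mul_comm : ∀ e f : G, e * e = e → f * f = f → e * f = f * e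

/-- The canonical image of `g : G` in the unitization over `ℂ` of the semigroup
algebra `MonoidAlgebra ℂ G`. -/
noncomputable def sgBasis {G : Type*} [InverseSemigroup G] (g : G) :
    Unitization ℂ (MonoidAlgebra ℂ G) :=
  Unitization.inr (MonoidAlgebra.single g (1 : ℂ))

/-- For a finite subinverse semigroup `H` (given as a finite subset of `G`), the element
`p_e = e ∏_{f ∈ E_H, e f ≠ e} (1 - f)` of the unitization of the semigroup algebra,
where `E_H` is the set of idempotents of `H`. -/
noncomputable def minProjH {G : Type*} [InverseSemigroup G] [DecidableEq G]
    (H : Finset G) (e : G) : Unitization ℂ (MonoidAlgebra ℂ G) :=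
  sgBasis e *
    (((H.filter fun f => f * f = f).filter fun f => e * f ≠ e).toList.map
      fun f => 1 - sgBasis f).prod

lemma Unitization.lift_inrNonUnitalAlgHom_comp_injective {R A B : Type*} [CommSemiring R]
    [NonUnitalSemiring A] [Module R A] [IsScalarTower R A A] [SMulCommClass R A A]
    [NonUnitalSemiring B] [Module R B] [IsScalarTower R B B] [SMulCommClass R B B]
    {φ : A →ₙₐ[R] B} (hφ : Function.Injective φ) :
    Function.Injective (Unitization.lift ((Unitization.inrNonUnitalAlgHom R B).comp φ)) := by
  intro x y h
  have hfst : x.fst = y.fst := by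
    simpa [Unitization.lift_apply, Unitization.algebraMap_eq_inl] using congrArg (·.fst) h
  have hsnd : φ x.snd = φ y.snd := by
    simpa [Unitization.lift_apply, Unitization.algebraMap_eq_inl] using congrArg (·.snd) h
  exact Unitization.ext hfst (hφ hsnd)

namespace InverseSemigroup

variable {G : Type*} [InverseSemigroup G]

lemma isIdempotentElem_star_mul_self (g : G) : IsIdempotentElem (star g * g) := by
  rw [IsIdempotentElem, mul_assoc, ← mul_assoc g, mul_star_mul_self g]

lemma isIdempotentElem_mul {x y : G} (hx : IsIdempotentElem x) (hy : IsIdempotentElem y) :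
    IsIdempotentElem (x * y) :=
  hx.mul_of_commute (idem_mul_comm x y hx hy) hy

lemma mul_mul_eq_self_iff {e x y : G} (hx : IsIdempotentElem x) (hy : IsIdempotentElem y) :
    e * (x * y) = e ↔ e * x = e ∧ e * y = e := by
  refine ⟨fun h => ⟨?_, ?_⟩, fun ⟨h₁, h₂⟩ => by rw [← mul_assoc, h₁, h₂]⟩
  · rw [← h, mul_assoc, mul_assoc, ← idem_mul_comm x y hx hy, ← mul_assoc x, hx.eq]
  · rw [← h, mul_assoc, mul_assoc, hy.eq]

variable (G) in
abbrev Idempotents : Type _ := {x : G // IsIdempotentElem x}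

instance : CommSemigroup (Idempotents G) where
  mul x y := ⟨x.1 * y.1, isIdempotentElem_mul x.2 y.2⟩
  mul_assoc x y z := Subtype.ext (mul_assoc x.1 y.1 z.1)
  mul_comm x y := Subtype.ext (idem_mul_comm x.1 y.1 x.2 y.2)

def Idempotents.subtype : Idempotents G →ₙ* G where
  toFun := Subtype.val
  map_mul' _ _ := rfl

open Classical in
noncomputable def idempotentCharacter (e : G) : Idempotents G →ₙ* ℂ where
  toFun x := if e * x.1 = e then 1 else 0
  map_mul' x y := by
    change (if e * (x.1 * y.1) = e then (1 : ℂ) else 0) = _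
    rw [mul_mul_eq_self_iff x.2 y.2]
    split_ifs <;> simp_all

lemma idempotentCharacter_eq_one_iff {e : G} {x : Idempotents G} :
    idempotentCharacter e x = 1 ↔ e * x.1 = e := by
  simp [idempotentCharacter]

lemma idempotentCharacter_eq_zero_iff {e : G} {x : Idempotents G} :
    idempotentCharacter e x = 0 ↔ e * x.1 ≠ e := by
  simp [idempotentCharacter]

local notation "𝔸" X => Unitization ℂ (MonoidAlgebra ℂ X)

noncomputable def idempotentsBasis (x : Idempotents G) : 𝔸 (Idempotents G) :=
  Unitization.inr (MonoidAlgebra.single x 1)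

noncomputable def idempotentsInclusion : (𝔸 (Idempotents G)) →ₐ[ℂ] 𝔸 G :=
  Unitization.lift ((Unitization.inrNonUnitalAlgHom ℂ _).comp
    (MonoidAlgebra.mapDomainNonUnitalAlgHom ℂ ℂ Idempotents.subtype))

lemma idempotentsInclusion_injective : Function.Injective (idempotentsInclusion (G := G)) :=
  Unitization.lift_inrNonUnitalAlgHom_comp_injective
    (MonoidAlgebra.mapDomain_injective Subtype.val_injective)

@[simp]
lemma idempotentsInclusion_basis (x : Idempotents G) :
    idempotentsInclusion (idempotentsBasis x) = sgBasis x.1 := by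
  simp [idempotentsInclusion, idempotentsBasis, sgBasis, Unitization.lift_apply,
    Idempotents.subtype]

noncomputable def idempotentCharacterAlgHom (e : G) : (𝔸 (Idempotents G)) →ₐ[ℂ] ℂ :=
  Unitization.lift (MonoidAlgebra.liftMagma ℂ (idempotentCharacter e))

@[simp]
lemma idempotentCharacterAlgHom_basis (e : G) (x : Idempotents G) :
    idempotentCharacterAlgHom e (idempotentsBasis x) = idempotentCharacter e x := by
  simp [idempotentCharacterAlgHom, idempotentsBasis, Unitization.lift_apply]

lemma exists_idempotentsInclusion_eq_minProjH [DecidableEq G] (H : Finset G) {e : G}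
    (he : IsIdempotentElem e) :
    ∃ p, idempotentsInclusion p = minProjH H e ∧ idempotentCharacterAlgHom e p = 1 := by
  set l := ((H.filter fun f => f * f = f).filter fun f => e * f ≠ e).toList with hl
  have hl_mem : ∀ f ∈ l, IsIdempotentElem f ∧ e * f ≠ e := fun f hf => by
    simp only [hl, Finset.mem_toList, Finset.mem_filter] at hf
    exact ⟨hf.1.2, hf.2⟩
  lift l to List (Idempotents G) using fun f hf => (hl_mem f hf).1 with l'
  refine ⟨idempotentsBasis ⟨e, he⟩ * (l'.map fun f => 1 - idempotentsBasis f).prod, ?_, ?_⟩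
  · simp [minProjH, ← hl, map_list_prod, List.map_map, Function.comp_def]
  · have he_char : idempotentCharacter e ⟨e, he⟩ = 1 := idempotentCharacter_eq_one_iff.2 he
    simp only [map_mul, map_list_prod, List.map_map, Function.comp_def, map_sub, map_one,
      idempotentCharacterAlgHom_basis, he_char, one_mul]
    refine List.prod_eq_one fun x hx => ?_
    obtain ⟨f, hf, rfl⟩ := List.mem_map.1 hx
    rw [idempotentCharacter_eq_zero_iff.2 (hl_mem f.1 (List.mem_map_of_mem hf)).2, sub_zero]

end InverseSemigroup

theorem stmt_15 {G : Type*} [InverseSemigroup G] [DecidableEq G] (H : Finset G)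
    (g : G) (e : G) (he : e * e = e)
    (hp : minProjH H e * sgBasis (star g * g) * minProjH H e = minProjH H e) :
    e * (star g * g) = e := by
  obtain ⟨p, hp_incl, hp_char⟩ := InverseSemigroup.exists_idempotentsInclusion_eq_minProjH H he
  set s : InverseSemigroup.Idempotents G :=
    ⟨star g * g, InverseSemigroup.isIdempotentElem_star_mul_self g⟩
  have hps : p * InverseSemigroup.idempotentsBasis s * p = p :=
    InverseSemigroup.idempotentsInclusion_injective <| by
      rwa [map_mul, map_mul, hp_incl, InverseSemigroup.idempotentsInclusion_basis]
  have hs_char : InverseSemigroup.idempotentCharacter e s = 1 := by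
    simpa [hp_char] using congrArg (InverseSemigroup.idempotentCharacterAlgHom e) hps
  exact InverseSemigroup.idempotentCharacter_eq_one_iff.1 hs_char
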